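/- In a weakly norming graph H without isolated vertices, every connected component has the same number of edges. -/

import Mathlib

open MeasureTheory

noncomputable def sym2Val {V Ω : Type*} (W : Ω → Ω → ℝ) (x : V → Ω) : Sym2 V → ℝ :=
  Sym2.lift ⟨fun i j => (W (x i) (x j) + W (x j) (x i)) / 2, fun i j => by simp [add_comm]⟩

/-- Homomorphism density `t(G, W)` of a graph `G` in a symmetric kernel `W`. -/
noncomputable def homDensity {V : Type} [Fintype V] {Ω : Type*} [MeasurableSpace Ω]
    (G : SimpleGraph V) (μ : Measure Ω) (W : Ω → Ω → ℝ) : ℝ :=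
  ∫ x : V → Ω, ∏ᶠ e ∈ G.edgeSet, sym2Val W x e ∂(Measure.pi fun _ => μ)

/-- Decorated homomorphism density `t(G, w)` for a decoration `w` of the edges. -/
noncomputable def decDensity {V : Type} [Fintype V] {Ω : Type*} [MeasurableSpace Ω]
    (G : SimpleGraph V) (μ : Measure Ω) (w : Sym2 V → Ω → Ω → ℝ) : ℝ :=
  ∫ x : V → Ω, ∏ᶠ e ∈ G.edgeSet, sym2Val (w e) x e ∂(Measure.pi fun _ => μ)

/-- Bounded symmetric measurable kernel. -/
def GoodKernel {Ω : Type*} [MeasurableSpace Ω] (W : Ω → Ω → ℝ) : Prop :=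
  Measurable (Function.uncurry W) ∧ (∀ x y, W x y = W y x) ∧ ∃ C, ∀ x y, |W x y| ≤ C

/-- Hatami's Hölder-type characterisation of weakly norming graphs. -/
def WeaklyNorming {V : Type} [Fintype V] (G : SimpleGraph V) : Prop :=
  ∀ (Ω : Type) (_ : MeasurableSpace Ω) (μ : Measure Ω), IsProbabilityMeasure μ →
    ∀ w : Sym2 V → Ω → Ω → ℝ, (∀ e, GoodKernel (w e)) → (∀ e x y, 0 ≤ w e x y) →
      decDensity G μ w ^ G.edgeSet.ncard ≤ ∏ᶠ e ∈ G.edgeSet, homDensity G μ (w e)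

/-- Hatami's Hölder-type characterisation of seminorming graphs. -/
def Seminorming {V : Type} [Fintype V] (G : SimpleGraph V) : Prop :=
  ∀ (Ω : Type) (_ : MeasurableSpace Ω) (μ : Measure Ω), IsProbabilityMeasure μ →
    ∀ w : Sym2 V → Ω → Ω → ℝ, (∀ e, GoodKernel (w e)) →
      decDensity G μ w ^ G.edgeSet.ncard ≤ ∏ᶠ e ∈ G.edgeSet, |homDensity G μ (w e)|

/-- Norming: seminorming and `‖·‖_H` vanishes only on a.e.-zero kernels. -/
def Norming {V : Type} [Fintype V] (G : SimpleGraph V) : Prop :=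
  Seminorming G ∧
    ∀ (Ω : Type) (_ : MeasurableSpace Ω) (μ : Measure Ω), IsProbabilityMeasure μ →
      ∀ W : Ω → Ω → ℝ, GoodKernel W → homDensity G μ W = 0 →
        ∀ᵐ p ∂(μ.prod μ), W p.1 p.2 = 0


/-! Test `H` against `0/1` kernels on the uniform two-point space `Bool`, putting the kernel on
the edges of one component `c` and the constant `1` on all other edges. Let `n`, `k`, `e(H)`
be the numbers of vertices, components and edges of `H`, and `s_c`, `m_c` those of vertices and
edges of `c`. The kernel `[x = y = false]` has decorated density `2^(-s_c)` (every vertex of `c`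
lies on an edge of `c`) and density `2^(-n)`, so weak norming gives `n m_c ≤ s_c e(H)`. The
kernel `[x = y]` has decorated density `2^(1 - s_c)` and density `2^(k - n)`, which gives
`e(H) + n m_c ≤ k m_c + s_c e(H)`. Both inequalities become equalities after summing over `c`,
so they are equalities for every `c`, and together they give `e(H) = k m_c`. -/

open ProbabilityTheory

lemma finprod_mem_const_of_finite {α M : Type*} [CommMonoid M] {s : Set α} (hs : s.Finite)
    (c : M) : ∏ᶠ _ ∈ s, c = c ^ s.ncard := by
  rw [finprod_mem_eq_finite_toFinset_prod _ hs, Finset.prod_const, Set.ncard_eq_toFinset_card s hs]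

open Classical in
lemma finprod_mem_eq_ite_of_zero_or_one {α M₀ : Type*} [CommMonoidWithZero M₀] {s : Set α}
    (hs : s.Finite) {g : α → M₀} (hg : ∀ a ∈ s, g a = 0 ∨ g a = 1) :
    ∏ᶠ a ∈ s, g a = if ∀ a ∈ s, g a = 1 then 1 else 0 := by
  split_ifs with h
  · exact finprod_mem_eq_one_of_forall_eq_one h
  · obtain ⟨a, ha, ha1⟩ := not_forall₂.mp h
    rw [finprod_mem_eq_finite_toFinset_prod _ hs]
    exact Finset.prod_eq_zero (hs.mem_toFinset.2 ha) ((hg a ha).resolve_right ha1)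

theorem Set.sum_ncard_sep_eq {α ι : Type*} [Fintype ι] {s : Set α} (hs : s.Finite)
    (f : α → ι) :
    ∑ i, {a ∈ s | f a = i}.ncard = s.ncard := by
  classical
  rw [Set.ncard_eq_toFinset_card s hs,
    Finset.card_eq_sum_card_fiberwise (f := f) (t := Finset.univ) (by simp)]
  refine Finset.sum_congr rfl fun i _ => ?_
  rw [Set.ncard_eq_toFinset_card _ (hs.subset (Set.sep_subset _ _))]
  congr 1
  ext a
  simp

lemma pow_div_pow_eq_zpow_sub {K : Type*} [DivisionRing K] {q : K} (hq : q ≠ 0) (m n : ℕ) :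
    q ^ m / q ^ n = q ^ ((m : ℤ) - n) := by
  rw [zpow_sub₀ hq, zpow_natCast, zpow_natCast]

section FunctionCounting

variable {V β : Type*} [Fintype V] [DecidableEq V] [Fintype β]

theorem integral_pi_uniformOn_univ [MeasurableSpace β] [MeasurableSingletonClass β]
    (f : (V → β) → ℝ) :
    ∫ x, f x ∂(Measure.pi fun _ : V => uniformOn (Set.univ : Set β))
      = (∑ x, f x) / Fintype.card β ^ Fintype.card V := by
  rw [integral_fintype (.of_finite), Finset.sum_div]
  refine Finset.sum_congr rfl fun x _ => ?_
  rw [measureReal_def, ← Set.univ_pi_singleton, Measure.pi_pi]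
  simp [uniformOn_univ, div_eq_inv_mul]

theorem card_forall_mem_eq (S : Set V) (b : β) :
    Nat.card {x : V → β // ∀ v ∈ S, x v = b} = Nat.card β ^ Sᶜ.ncard := by
  classical
  have hpi : (Finset.univ.filter fun x : V → β => ∀ v ∈ S, x v = b)
      = Fintype.piFinset fun v => if v ∈ S then {b} else Finset.univ := by
    ext x
    simp only [Finset.mem_filter, Finset.mem_univ, true_and, Fintype.mem_piFinset]
    refine forall_congr' fun v => ?_
    split_ifs with hv <;> simp [hv]
  rw [Nat.card_eq_fintype_card, Fintype.card_subtype, hpi, Fintype.card_piFinset]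
  simp only [apply_ite Finset.card, Finset.card_singleton, Finset.card_univ]
  rw [Finset.prod_ite, Set.ncard_eq_toFinset_card']
  simp only [Finset.prod_const_one, one_mul, Finset.prod_const]
  rw [Nat.card_eq_fintype_card]
  congr 2
  ext v
  simp

theorem card_exists_forall_mem_eq {S : Set V} (hS : S.Nonempty) :
    Nat.card {x : V → β // ∃ b, ∀ v ∈ S, x v = b}
      = Nat.card β * Nat.card β ^ Sᶜ.ncard := by
  classical
  obtain ⟨v₀, hv₀⟩ := hS
  have hunion : (Finset.univ.filter fun x : V → β => ∃ b, ∀ v ∈ S, x v = b)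
      = Finset.univ.biUnion fun b =>
          Finset.univ.filter fun x : V → β => ∀ v ∈ S, x v = b := by
    ext x
    simp
  have hdisj : (Set.univ : Set β).PairwiseDisjoint
      fun b => Finset.univ.filter fun x : V → β => ∀ v ∈ S, x v = b :=
    fun b₁ _ b₂ _ hne => Finset.disjoint_filter.2 fun x _ h₁ h₂ =>
      hne ((h₁ v₀ hv₀).symm.trans (h₂ v₀ hv₀))
  rw [Nat.card_eq_fintype_card, Fintype.card_subtype, hunion,
    Finset.card_biUnion (by simpa using hdisj)]
  simp_rw [← Fintype.card_subtype, ← Nat.card_eq_fintype_card, card_forall_mem_eq]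
  simp

end FunctionCounting

namespace SimpleGraph

variable {V : Type*} {H : SimpleGraph V}

theorem ConnectedComponent.apply_eq_of_forall_adj {β : Type*} {c : H.ConnectedComponent}
    {f : V → β} (hf : ∀ a b, H.Adj a b → a ∈ c.supp → f a = f b) {u v : V}
    (hu : u ∈ c.supp) (hv : v ∈ c.supp) : f u = f v := by
  obtain ⟨p⟩ := ConnectedComponent.exact (hu.trans hv.symm)
  induction p with
  | nil => rfl
  | cons h p ih => exact (hf _ _ h hu).trans (ih ((c.mem_supp_congr_adj h).1 hu) hv)

variable (H) in
noncomputable def constOnComponentsEquiv (β : Type*) :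
    {x : V → β // ∀ a b, H.Adj a b → x a = x b} ≃ (H.ConnectedComponent → β) where
  toFun x c := x.1 c.out
  invFun y := ⟨y ∘ H.connectedComponentMk,
    fun _ _ h => congrArg y (ConnectedComponent.connectedComponentMk_eq_of_adj h)⟩
  left_inv x := Subtype.ext <| funext fun v =>
    ConnectedComponent.apply_eq_of_forall_adj (c := H.connectedComponentMk v)
      (fun a b h _ => x.2 a b h) (H.connectedComponentMk v).out_eq rfl
  right_inv y := funext fun c => congrArg y c.out_eq

variable (H) in
theorem card_forall_adj_eq [Finite V] (β : Type*) :
    Nat.card {x : V → β // ∀ a b, H.Adj a b → x a = x b}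
      = Nat.card β ^ Nat.card H.ConnectedComponent := by
  rw [Nat.card_congr (H.constOnComponentsEquiv β), Nat.card_fun]

namespace ConnectedComponent

theorem mem_supp_sym2_iff (c : H.ConnectedComponent) {e : Sym2 V} (he : e ∈ H.edgeSet) {v : V}
    (hv : v ∈ e) : e ∈ c.supp.sym2 ↔ v ∈ c.supp := by
  induction e using Sym2.ind with
  | _ a b =>
    rw [Set.mk_mem_sym2_iff, ← c.mem_supp_congr_adj he, and_self]
    rcases Sym2.mem_iff.1 hv with rfl | rfl
    · rfl
    · exact c.mem_supp_congr_adj he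

theorem sum_ncard_supp [Finite V] [Fintype H.ConnectedComponent] :
    ∑ c : H.ConnectedComponent, c.supp.ncard = Nat.card V := by
  rw [← Set.ncard_univ, ← Set.sum_ncard_sep_eq Set.finite_univ H.connectedComponentMk]
  simp [ConnectedComponent.supp]

theorem sum_ncard_edgeSet_inter_supp_sym2 [Finite V] [Fintype H.ConnectedComponent] :
    ∑ c : H.ConnectedComponent, (H.edgeSet ∩ c.supp.sym2).ncard = H.edgeSet.ncard := by
  rw [← Set.sum_ncard_sep_eq H.edgeSet.toFinite fun e => H.connectedComponentMk e.out.1]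
  refine Finset.sum_congr rfl fun c _ => congrArg Set.ncard <| Set.ext fun e => ?_
  simp only [Set.mem_inter_iff, Set.mem_ofPred_eq]
  exact and_congr_right fun he => c.mem_supp_sym2_iff he (Sym2.out_fst_mem e)

end ConnectedComponent

end SimpleGraph

section Kernels

variable {V Ω : Type*}

lemma sym2Val_one (x : V → Ω) (e : Sym2 V) : sym2Val (1 : Ω → Ω → ℝ) x e = 1 := by
  induction e using Sym2.ind with
  | _ i j => norm_num [sym2Val]

lemma sym2Val_mk_of_symm {W : Ω → Ω → ℝ} (hW : ∀ a b, W a b = W b a) (x : V → Ω)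
    (i j : V) :
    sym2Val W x s(i, j) = W (x i) (x j) := by
  simp [sym2Val, hW (x j) (x i)]

lemma sym2Val_mulIndicator (F : Set (Sym2 V)) (K : Ω → Ω → ℝ) (x : V → Ω) (e : Sym2 V) :
    sym2Val (F.mulIndicator (fun _ => K) e) x e = F.mulIndicator (fun e => sym2Val K x e) e := by
  by_cases he : e ∈ F <;> simp [he, sym2Val_one]

lemma goodKernel_of_finite [MeasurableSpace Ω] [Finite Ω] [MeasurableSingletonClass Ω]
    {W : Ω → Ω → ℝ} (hW : ∀ a b, W a b = W b a) : GoodKernel W := by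
  obtain ⟨C, hC⟩ := (Set.finite_range fun p : Ω × Ω => |W p.1 p.2|).bddAbove
  exact ⟨measurable_of_countable _, hW, C, fun a b => hC ⟨(a, b), rfl⟩⟩

def relKernel (r : Ω → Ω → Prop) [DecidableRel r] : Ω → Ω → ℝ :=
  fun a b => if r a b then 1 else 0

variable {r : Ω → Ω → Prop} [DecidableRel r]

lemma relKernel_nonneg (a b : Ω) : 0 ≤ relKernel r a b := by
  unfold relKernel
  split_ifs <;> norm_num

lemma relKernel_symm (hr : ∀ a b, r a b → r b a) (a b : Ω) :
    relKernel r a b = relKernel r b a := by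
  simp only [relKernel, show r a b ↔ r b a from ⟨hr a b, hr b a⟩]

lemma sym2Val_relKernel_eq_zero_or_one (hr : ∀ a b, r a b → r b a) (x : V → Ω) (e : Sym2 V) :
    sym2Val (relKernel r) x e = 0 ∨ sym2Val (relKernel r) x e = 1 := by
  induction e using Sym2.ind with
  | _ i j =>
    rw [sym2Val_mk_of_symm (relKernel_symm hr)]
    unfold relKernel
    split_ifs <;> simp

lemma sym2Val_relKernel_mk_eq_one_iff (hr : ∀ a b, r a b → r b a) (x : V → Ω) (i j : V) :
    sym2Val (relKernel r) x s(i, j) = 1 ↔ r (x i) (x j) := by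
  rw [sym2Val_mk_of_symm (relKernel_symm hr)]
  unfold relKernel
  split_ifs with h <;> simp [h]

end Kernels

section Densities

variable {V : Type} [Fintype V] (H : SimpleGraph V)

lemma homDensity_one {Ω : Type*} [MeasurableSpace Ω] (μ : Measure Ω) [IsProbabilityMeasure μ] :
    homDensity H μ 1 = 1 := by
  simp [homDensity, sym2Val_one]

lemma homDensity_eq_decDensity_mulIndicator_univ {Ω : Type*} [MeasurableSpace Ω] (μ : Measure Ω)
    (K : Ω → Ω → ℝ) :
    homDensity H μ K = decDensity H μ (Set.univ.sym2.mulIndicator fun _ => K) := by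
  simp only [Set.sym2_univ, Set.mulIndicator_univ]
  rfl

variable [DecidableEq V] {β : Type} [Fintype β] [MeasurableSpace β] [MeasurableSingletonClass β]

theorem decDensity_mulIndicator_sym2_relKernel {r : β → β → Prop} [DecidableRel r]
    (hr : ∀ a b, r a b → r b a) (S : Set V) :
    decDensity H (uniformOn Set.univ) (S.sym2.mulIndicator fun _ => relKernel r)
      = Nat.card {x : V → β // ∀ a b, H.Adj a b → a ∈ S → b ∈ S → r (x a) (x b)}
          / Nat.card β ^ Nat.card V := by
  classical
  have hprod (x : V → β) :
      ∏ᶠ e ∈ H.edgeSet, sym2Val ((S.sym2.mulIndicator fun _ => relKernel r) e) x e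
        = if ∀ a b, H.Adj a b → a ∈ S → b ∈ S → r (x a) (x b) then 1 else 0 := by
    simp_rw [sym2Val_mulIndicator]
    rw [finprod_mem_def, Set.mulIndicator_mulIndicator, ← finprod_mem_def,
      finprod_mem_eq_ite_of_zero_or_one (H.edgeSet.toFinite.inter_of_left _)
        fun e _ => sym2Val_relKernel_eq_zero_or_one hr x e]
    simp [Sym2.forall, sym2Val_relKernel_mk_eq_one_iff hr]
  simp only [decDensity, hprod, integral_pi_uniformOn_univ, Finset.sum_boole,
    Nat.card_eq_fintype_card, Fintype.card_subtype]

variable [DecidableEq β] [Nonempty β]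

theorem decDensity_mulIndicator_relKernel_both_eq (hnoiso : ∀ v : V, ∃ u, H.Adj v u) {S : Set V}
    (hS : ∀ a b, H.Adj a b → a ∈ S → b ∈ S) (b₀ : β) :
    decDensity H (uniformOn Set.univ)
        (S.sym2.mulIndicator fun _ => relKernel fun a b => a = b₀ ∧ b = b₀)
      = (Nat.card β : ℝ) ^ (-(S.ncard : ℤ)) := by
  have hcond (x : V → β) :
      (∀ a b, H.Adj a b → a ∈ S → b ∈ S → x a = b₀ ∧ x b = b₀) ↔
        ∀ v ∈ S, x v = b₀ :=
    ⟨fun h v hv => have ⟨u, hu⟩ := hnoiso v; (h v u hu hv (hS v u hu hv)).1,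
      fun h a b _ ha hb => ⟨h a ha, h b hb⟩⟩
  rw [decDensity_mulIndicator_sym2_relKernel H (fun _ _ h => h.symm) S,
    Nat.card_congr (Equiv.subtypeEquivRight hcond), card_forall_mem_eq]
  have := S.ncard_add_ncard_compl
  rw [Nat.cast_pow, pow_div_pow_eq_zpow_sub (by simp)]
  congr 1
  omega

theorem homDensity_relKernel_both_eq (hnoiso : ∀ v : V, ∃ u, H.Adj v u) (b₀ : β) :
    homDensity H (uniformOn Set.univ) (relKernel fun a b => a = b₀ ∧ b = b₀)
      = (Nat.card β : ℝ) ^ (-(Nat.card V : ℤ)) := by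
  rw [homDensity_eq_decDensity_mulIndicator_univ,
    decDensity_mulIndicator_relKernel_both_eq H hnoiso (S := Set.univ) (fun _ _ _ _ => trivial),
    Set.ncard_univ]

theorem decDensity_mulIndicator_supp_relKernel_eq (c : H.ConnectedComponent) :
    decDensity H (uniformOn Set.univ)
        (c.supp.sym2.mulIndicator fun _ => relKernel (· = · : β → β → Prop))
      = (Nat.card β : ℝ) ^ (1 - c.supp.ncard : ℤ) := by
  have hcond (x : V → β) : (∀ a b, H.Adj a b → a ∈ c.supp → b ∈ c.supp → x a = x b)
      ↔ ∃ b, ∀ v ∈ c.supp, x v = b := by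
    refine ⟨fun h => ?_, fun ⟨b, hb⟩ a a' _ ha ha' => (hb a ha).trans (hb a' ha').symm⟩
    obtain ⟨v₀, hv₀⟩ := c.nonempty_supp
    exact ⟨x v₀, fun v hv => SimpleGraph.ConnectedComponent.apply_eq_of_forall_adj
      (fun a b hab ha => h a b hab ha ((c.mem_supp_congr_adj hab).1 ha)) hv hv₀⟩
  rw [decDensity_mulIndicator_sym2_relKernel H (fun _ _ h => h.symm) c.supp,
    Nat.card_congr (Equiv.subtypeEquivRight hcond), card_exists_forall_mem_eq c.nonempty_supp]
  have := c.supp.ncard_add_ncard_compl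
  rw [← pow_succ', Nat.cast_pow, pow_div_pow_eq_zpow_sub (by simp)]
  congr 1
  omega

theorem homDensity_relKernel_eq :
    homDensity H (uniformOn Set.univ) (relKernel (· = · : β → β → Prop))
      = (Nat.card β : ℝ) ^ (Nat.card H.ConnectedComponent - Nat.card V : ℤ) := by
  rw [homDensity_eq_decDensity_mulIndicator_univ,
    decDensity_mulIndicator_sym2_relKernel H (fun _ _ h => h.symm)]
  simp only [Set.mem_univ, forall_const]
  rw [H.card_forall_adj_eq, Nat.cast_pow, pow_div_pow_eq_zpow_sub (by simp)]

end Densities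

section WeaklyNorming

variable {V : Type} [Fintype V] {H : SimpleGraph V}

theorem WeaklyNorming.decDensity_mulIndicator_pow_le (hH : WeaklyNorming H) {Ω : Type}
    [MeasurableSpace Ω] (μ : Measure Ω) [IsProbabilityMeasure μ] {K : Ω → Ω → ℝ}
    (hK : GoodKernel K) (hK₀ : ∀ a b, 0 ≤ K a b) (F : Set (Sym2 V)) :
    decDensity H μ (F.mulIndicator fun _ => K) ^ H.edgeSet.ncard
      ≤ homDensity H μ K ^ (H.edgeSet ∩ F).ncard := by
  have hhom (e : Sym2 V) : homDensity H μ (F.mulIndicator (fun _ => K) e)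
      = F.mulIndicator (fun _ => homDensity H μ K) e := by
    by_cases he : e ∈ F <;> simp [he, homDensity_one]
  have hgood (e : Sym2 V) : GoodKernel (F.mulIndicator (fun _ => K) e) := by
    by_cases he : e ∈ F
    · simpa [he] using hK
    · rw [Set.mulIndicator_of_notMem he]
      exact ⟨measurable_const, fun _ _ => rfl, 1, fun _ _ => by simp⟩
  have hnonneg (e : Sym2 V) (a b : Ω) : 0 ≤ F.mulIndicator (fun _ => K) e a b := by
    by_cases he : e ∈ F <;> simp [he, hK₀]
  have := hH Ω _ μ inferInstance _ hgood hnonneg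
  rwa [finprod_congr fun e => by rw [hhom], finprod_mem_def, Set.mulIndicator_mulIndicator,
    ← finprod_mem_def, finprod_mem_const_of_finite (H.edgeSet.toFinite.inter_of_left _)] at this

theorem WeaklyNorming.mul_ncard_le_of_eq_zpow (hH : WeaklyNorming H) {β : Type} [Fintype β]
    [Nontrivial β] [MeasurableSpace β] [MeasurableSingletonClass β] {K : β → β → ℝ}
    (hK : ∀ a b, K a b = K b a) (hK₀ : ∀ a b, 0 ≤ K a b) (F : Set (Sym2 V)) {a b : ℤ}
    (hdec : decDensity H (uniformOn Set.univ) (F.mulIndicator fun _ => K) = Nat.card β ^ a)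
    (hhom : homDensity H (uniformOn Set.univ) K = Nat.card β ^ b) :
    a * H.edgeSet.ncard ≤ b * (H.edgeSet ∩ F).ncard := by
  have := hH.decDensity_mulIndicator_pow_le (uniformOn Set.univ) (goodKernel_of_finite hK) hK₀ F
  rwa [hdec, hhom, ← zpow_natCast, ← zpow_mul, ← zpow_natCast, ← zpow_mul,
    zpow_le_zpow_iff_right₀ (by exact_mod_cast Finite.one_lt_card)] at this

theorem WeaklyNorming.card_mul_ncard_le (hH : WeaklyNorming H)
    (hnoiso : ∀ v : V, ∃ u, H.Adj v u) (c : H.ConnectedComponent) :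
    Nat.card V * (H.edgeSet ∩ c.supp.sym2).ncard ≤ c.supp.ncard * H.edgeSet.ncard := by
  classical
  have := hH.mul_ncard_le_of_eq_zpow (β := Bool) (relKernel_symm fun _ _ h => h.symm)
    relKernel_nonneg _
    (decDensity_mulIndicator_relKernel_both_eq H hnoiso
      (fun _ _ h => (c.mem_supp_congr_adj h).1) false)
    (homDensity_relKernel_both_eq H hnoiso false)
  zify
  linarith

theorem WeaklyNorming.ncard_add_card_mul_le (hH : WeaklyNorming H) (c : H.ConnectedComponent) :
    H.edgeSet.ncard + Nat.card V * (H.edgeSet ∩ c.supp.sym2).ncard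
      ≤ Nat.card H.ConnectedComponent * (H.edgeSet ∩ c.supp.sym2).ncard
        + c.supp.ncard * H.edgeSet.ncard := by
  classical
  have := hH.mul_ncard_le_of_eq_zpow (β := Bool) (relKernel_symm fun _ _ h => h.symm)
    relKernel_nonneg _ (decDensity_mulIndicator_supp_relKernel_eq H c) (homDensity_relKernel_eq H)
  zify
  linarith

theorem WeaklyNorming.ncard_edgeSet_eq_card_mul (hH : WeaklyNorming H)
    (hnoiso : ∀ v : V, ∃ u, H.Adj v u) (c : H.ConnectedComponent) :
    H.edgeSet.ncard = Nat.card H.ConnectedComponent * (H.edgeSet ∩ c.supp.sym2).ncard := by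
  classical
  have hs := SimpleGraph.ConnectedComponent.sum_ncard_supp (H := H)
  have hm := SimpleGraph.ConnectedComponent.sum_ncard_edgeSet_inter_supp_sym2 (H := H)
  have hlow := (Finset.sum_eq_sum_iff_of_le (s := Finset.univ)
    fun c _ => hH.card_mul_ncard_le hnoiso c).1
      (by rw [← Finset.mul_sum, ← Finset.sum_mul, hs, hm, mul_comm]) c (Finset.mem_univ c)
  have hdiag := (Finset.sum_eq_sum_iff_of_le (s := Finset.univ)
    fun c _ => hH.ncard_add_card_mul_le c).1
      (by simp only [Finset.sum_add_distrib, ← Finset.mul_sum, ← Finset.sum_mul, hs, hm,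
        Finset.sum_const, Finset.card_univ, smul_eq_mul, ← Nat.card_eq_fintype_card])
      c (Finset.mem_univ c)
  linarith

end WeaklyNorming

/-- Every connected component of a weakly norming graph `H` without isolated vertices has
the same number of edges. -/
theorem weaklyNorming_components_edge_count {V : Type} [Fintype V]
    (H : SimpleGraph V) (hH : WeaklyNorming H)
    (hnoiso : ∀ v : V, ∃ u, H.Adj v u) (c₁ c₂ : H.ConnectedComponent) :
    {e ∈ H.edgeSet | ∀ v ∈ e, v ∈ c₁.supp}.ncard
      = {e ∈ H.edgeSet | ∀ v ∈ e, v ∈ c₂.supp}.ncard := by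
  have hset (c : H.ConnectedComponent) :
      {e ∈ H.edgeSet | ∀ v ∈ e, v ∈ c.supp} = H.edgeSet ∩ c.supp.sym2 := by
    ext ⟨a, b⟩
    simp
  have : Nonempty H.ConnectedComponent := ⟨c₁⟩
  rw [hset, hset]
  exact Nat.eq_of_mul_eq_mul_left Nat.card_pos
    ((hH.ncard_edgeSet_eq_card_mul hnoiso c₁).symm.trans
      (hH.ncard_edgeSet_eq_card_mul hnoiso c₂))
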